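/- Let n ≥ 1 and let S ⊆ Z_n be such that no k ∈ Z_n satisfies both k ∈ S and −k ∈ S. If the oriented circulant graph C(n,S) is a deeply critical oriented clique, then (a) for every k ∈ Z_n there exist x, y ∈ S ∪ {0} with k ≡ x + y (mod n) or k ≡ −(x + y) (mod n), and (b) for every s ∈ S and all x, y ∈ S ∪ {0}: if 2s ≡ x + y (mod n) then x = y = s, and 2s ≢ −(x + y) (mod n). -/

import Mathlib

/-!
In an absolute oriented clique any two vertices are joined by an arc or a directed 2-path,
since otherwise they could share a colour; for `C(n, S)` this is (a). For (b), delete the arc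
`0 → s` and take an oriented `(n - 2)`-colouring. Two nonzero vertices of the same colour are
then joined in `C(n, S)` only through the deleted arc, and translation invariance forces the
pair to be `{-s, s}`; since `n - 1` colours would be needed otherwise, `-s` and `s` share a
colour. So no arc or 2-path avoiding `0 → s` joins them, which is (b): a representation
`2s = x + y` other than `s + s` yields the path `-s → x - s → s`, and `2s = -(x + y)` yields
`s → s + x → -s`.
-/

/-- An oriented graph: a directed graph whose arc relation is irreflexive and
antisymmetric (no loops, and never both arcs `xy` and `yx`). -/
structure OrientedGraph (V : Type) where
  adj : V → V → Prop
  irrefl : ∀ v, ¬ adj v v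
  antisymm : ∀ u v, adj u v → ¬ adj v u

namespace OrientedGraph

variable {V : Type}

/-- An oriented `k`-colouring of `G`. -/
def IsColoring (G : OrientedGraph V) {k : ℕ} (φ : V → Fin k) : Prop :=
  (∀ x y, G.adj x y → φ x ≠ φ y) ∧
  (∀ x y u v, G.adj x y → G.adj u v → φ x = φ v → φ y ≠ φ u)

/-- The oriented chromatic number: the least `k` admitting an oriented `k`-colouring. -/
noncomputable def chromNum (G : OrientedGraph V) : ℕ :=
  sInf {k : ℕ | ∃ φ : V → Fin k, G.IsColoring φ}

/-- `G` with the arc `xy` removed. -/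
def deleteArc (G : OrientedGraph V) (x y : V) : OrientedGraph V where
  adj a b := G.adj a b ∧ ¬(a = x ∧ b = y)
  irrefl v h := G.irrefl v h.1
  antisymm u v h h' := G.antisymm u v h.1 h'.1

/-- An absolute oriented clique: `χo(G) = |V(G)|`. -/
def IsAbsoluteClique (G : OrientedGraph V) : Prop :=
  G.chromNum = Nat.card V

/-- A deeply critical oriented graph: removing any arc drops `χo` by exactly 2. -/
def IsDeeplyCritical (G : OrientedGraph V) : Prop :=
  ∀ x y, G.adj x y → (G.deleteArc x y).chromNum = G.chromNum - 2

/-- A deeply critical oriented clique. -/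
def IsDeeplyCriticalClique (G : OrientedGraph V) : Prop :=
  G.IsDeeplyCritical ∧ G.IsAbsoluteClique

/-- An extending partition `X 0 ⊔ X 1 ⊔ X 2` of `G` (indices mod 3). -/
def IsExtendingPartition (G : OrientedGraph V) (X : Fin 3 → Set V) : Prop :=
  (∀ v : V, ∃! i : Fin 3, v ∈ X i) ∧
  (∀ i : Fin 3, ∀ u ∈ X (i + 1), ∀ v ∈ X i, ¬ G.adj u v) ∧
  (∀ i : Fin 3, ∀ u ∈ X i, ∃ v ∈ X (i + 1), {w | w ∈ X i ∧ G.adj w v} = {u}) ∧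
  (∀ i : Fin 3, ∀ v ∈ X (i + 1), ∃ u ∈ X i, {w | w ∈ X (i + 1) ∧ G.adj u w} = {v})

/-- An oriented graph is extendable when it admits an extending partition. -/
def Extendable (G : OrientedGraph V) : Prop :=
  ∃ X : Fin 3 → Set V, G.IsExtendingPartition X

/-- Induced subgraph on the vertices satisfying `P`. -/
def induce (G : OrientedGraph V) (P : V → Prop) : OrientedGraph {v // P v} where
  adj a b := G.adj a.1 b.1
  irrefl a := G.irrefl a.1
  antisymm a b h := G.antisymm a.1 b.1 h

end OrientedGraph

/-- The new vertex `xᵢ⁻` of the 6-extension (for `i ∈ Fin 3`, representing `X_{i+1}`). -/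
abbrev xminus (i : Fin 3) : Fin 6 := ⟨2 * i.1, by omega⟩

/-- The new vertex `xᵢ⁺` of the 6-extension. -/
abbrev xplus (i : Fin 3) : Fin 6 := ⟨2 * i.1 + 1, by omega⟩

/-- The arcs among the six new vertices:
`x₁⁻x₂⁺, x₁⁺x₂⁻, x₂⁻x₃⁺, x₂⁺x₃⁻, x₃⁻x₁⁺, x₃⁺x₁⁻`. -/
abbrev extraAdj (s t : Fin 6) : Prop :=
  ∃ i : Fin 3, (s = xminus i ∧ t = xplus (i + 1)) ∨ (s = xplus i ∧ t = xminus (i + 1))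

lemma extra_irrefl : ∀ s : Fin 6, ¬ extraAdj s s := by decide

lemma extra_antisymm : ∀ s t : Fin 6, extraAdj s t → ¬ extraAdj t s := by decide

/-- The 6-extension of `G` with respect to the partition `X`. -/
def sixExtension {V : Type} (G : OrientedGraph V) (X : Fin 3 → Set V) :
    OrientedGraph (V ⊕ Fin 6) where
  adj a b :=
    match a, b with
    | Sum.inl u, Sum.inl v => G.adj u v
    | Sum.inr s, Sum.inl v => ∃ i : Fin 3, s = xminus i ∧ v ∈ X i
    | Sum.inl u, Sum.inr s => ∃ i : Fin 3, s = xplus i ∧ u ∈ X i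
    | Sum.inr s, Sum.inr t => extraAdj s t
  irrefl v := by
    cases v with
    | inl u => exact G.irrefl u
    | inr s => exact extra_irrefl s
  antisymm a b h h' := by
    cases a with
    | inl u =>
      cases b with
      | inl v => exact G.antisymm u v h h'
      | inr s =>
        obtain ⟨i, hi, -⟩ := h
        obtain ⟨j, hj, -⟩ := h'
        have := congrArg Fin.val (hi.symm.trans hj)
        simp at this
        omega
    | inr s =>
      cases b with
      | inl v =>
        obtain ⟨i, hi, -⟩ := h
        obtain ⟨j, hj, -⟩ := h'
        have := congrArg Fin.val (hi.symm.trans hj)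
        simp at this
        omega
      | inr t => exact extra_antisymm s t h h'

/-- The 4-extension of `G`: the subgraph of the 6-extension induced by deleting
`x₁⁺` and `x₂⁻`. -/
def fourExtension {V : Type} (G : OrientedGraph V) (X : Fin 3 → Set V) :
    OrientedGraph {v : V ⊕ Fin 6 // v ≠ Sum.inr (xplus 0) ∧ v ≠ Sum.inr (xminus 1)} :=
  (sixExtension G X).induce _

/-- The 2-extension of `G`: the subgraph of the 6-extension induced by deleting
`x₁⁻`, `x₂⁺`, `x₃⁻` and `x₃⁺`. -/
def twoExtension {V : Type} (G : OrientedGraph V) (X : Fin 3 → Set V) :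
    OrientedGraph {v : V ⊕ Fin 6 //
      v ≠ Sum.inr (xminus 0) ∧ v ≠ Sum.inr (xplus 1) ∧
      v ≠ Sum.inr (xminus 2) ∧ v ≠ Sum.inr (xplus 2)} :=
  (sixExtension G X).induce _

/-- The oriented circulant graph `C(n, S)`: vertex set `ZMod n`, with an arc from `i`
to `j` whenever `j - i ∈ S`. -/
def circulant (n : ℕ) (S : Set (ZMod n)) (hS : ∀ k : ZMod n, k ∈ S → -k ∉ S) :
    OrientedGraph (ZMod n) where
  adj i j := j - i ∈ S
  irrefl i h := hS (i - i) h (by simpa using h)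
  antisymm i j h h' := hS (j - i) h (by simpa [neg_sub] using h')

namespace OrientedGraph

variable {V : Type} (G : OrientedGraph V)

def ReachesInTwo (a b : V) : Prop :=
  G.adj a b ∨ ∃ c, G.adj a c ∧ G.adj c b

variable {G}

lemma IsColoring.ne_of_reachesInTwo {k : ℕ} {φ : V → Fin k} (hφ : G.IsColoring φ) {a b : V}
    (h : G.ReachesInTwo a b) : φ a ≠ φ b := by
  rcases h with hab | ⟨c, hac, hcb⟩
  · exact hφ.1 a b hab
  · exact fun hab => hφ.2 a c c b hac hcb hab rfl

lemma isColoring_of_injective {k : ℕ} {φ : V → Fin k} (hφ : Function.Injective φ) :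
    G.IsColoring φ := by
  refine ⟨fun x y hxy h => ?_, fun x y u v hxy huv h h' => ?_⟩
  · rw [hφ h] at hxy
    exact G.irrefl y hxy
  · obtain rfl := hφ h
    obtain rfl := hφ h'
    exact G.antisymm x y hxy huv

lemma isColoring_of_identifies_pair {k : ℕ} {φ : V → Fin k} {a b : V}
    (hφ : ∀ u v, φ u = φ v → u = v ∨ (u = a ∧ v = b) ∨ (u = b ∧ v = a))
    (hab : ¬ G.ReachesInTwo a b) (hba : ¬ G.ReachesInTwo b a) : G.IsColoring φ := by
  refine ⟨fun x y hxy h => ?_, fun x y u v hxy huv h h' => ?_⟩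
  · rcases hφ x y h with rfl | ⟨rfl, rfl⟩ | ⟨rfl, rfl⟩
    · exact G.irrefl x hxy
    · exact hab (Or.inl hxy)
    · exact hba (Or.inl hxy)
  · rcases hφ x v h with rfl | ⟨rfl, rfl⟩ | ⟨rfl, rfl⟩ <;>
      rcases hφ y u h' with rfl | ⟨rfl, rfl⟩ | ⟨rfl, rfl⟩
    · exact G.antisymm x y hxy huv
    · exact hba (Or.inr ⟨x, huv, hxy⟩)
    · exact hab (Or.inr ⟨x, huv, hxy⟩)
    · exact hab (Or.inr ⟨y, hxy, huv⟩)
    · exact G.irrefl _ hxy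
    · exact hab (Or.inl hxy)
    · exact hba (Or.inr ⟨y, hxy, huv⟩)
    · exact hba (Or.inl hxy)
    · exact G.irrefl _ hxy

lemma chromNum_le_of_isColoring {k : ℕ} {φ : V → Fin k} (hφ : G.IsColoring φ) :
    G.chromNum ≤ k :=
  Nat.sInf_le ⟨φ, hφ⟩

lemma exists_isColoring_chromNum (G : OrientedGraph V) [Fintype V] :
    ∃ φ : V → Fin G.chromNum, G.IsColoring φ :=
  Nat.sInf_mem (s := {k | ∃ φ : V → Fin k, G.IsColoring φ})
    ⟨_, _, isColoring_of_injective (Fintype.equivFin V).injective⟩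

/-- Otherwise `a` and `b` could share a colour, and `|V| - 1` colours would suffice. -/
lemma IsAbsoluteClique.reachesInTwo_or [Fintype V] (hG : G.IsAbsoluteClique) {a b : V}
    (hab : a ≠ b) : G.ReachesInTwo a b ∨ G.ReachesInTwo b a := by
  classical
  by_contra! hfar
  let merge : V → {v : V // v ≠ b} := fun v => if h : v = b then ⟨a, hab⟩ else ⟨v, h⟩
  have hmerge : ∀ u v, merge u = merge v → u = v ∨ (u = a ∧ v = b) ∨ (u = b ∧ v = a) := by
    intro u v huv
    have hval := congrArg Subtype.val huv
    by_cases hu : u = b <;> by_cases hv : v = b <;> simp only [merge, hu, hv] at hval <;> grind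
  have hφ : G.IsColoring (Fintype.equivFin _ ∘ merge) :=
    isColoring_of_identifies_pair (fun u v h => hmerge u v ((Fintype.equivFin _).injective h))
      hfar.1 hfar.2
  have hle := chromNum_le_of_isColoring hφ
  have hcard : Fintype.card {v : V // v ≠ b} = Fintype.card V - 1 := Set.card_ne_eq b
  have hpos : 0 < Fintype.card V := Fintype.card_pos_iff.mpr ⟨b⟩
  rw [hG, Nat.card_eq_fintype_card] at hle
  omega

lemma IsAbsoluteClique.eq_of_isColoring_deleteArc [Fintype V] (hG : G.IsAbsoluteClique)
    {x y : V} {k : ℕ} {φ : V → Fin k} (hφ : (G.deleteArc x y).IsColoring φ) {a b : V}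
    (hab : a ≠ b) (ha : a ≠ x) (hb : b ≠ x) (h : φ a = φ b) :
    (b = y ∧ G.adj a x) ∨ (a = y ∧ G.adj b x) := by
  have key : ∀ {a b}, a ≠ x → G.ReachesInTwo a b → φ a = φ b → b = y ∧ G.adj a x := by
    rintro a b ha (hab | ⟨c, hac, hcb⟩) h
    · exact absurd h (hφ.ne_of_reachesInTwo (Or.inl ⟨hab, fun h => ha h.1⟩))
    · by_contra hne
      refine hφ.ne_of_reachesInTwo (Or.inr ⟨c, ⟨hac, fun h => ha h.1⟩, hcb, ?_⟩) h
      rintro ⟨rfl, rfl⟩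
      exact hne ⟨rfl, hac⟩
  rcases hG.reachesInTwo_or hab with h' | h'
  · exact Or.inl (key ha h' h)
  · exact Or.inr (key hb h' h.symm)

end OrientedGraph

open OrientedGraph

lemma ne_zero_of_mem_of_forall_neg_notMem {A : Type*} [AddGroup A] {S : Set A}
    (hS : ∀ k : A, k ∈ S → -k ∉ S) {s : A} (hs : s ∈ S) : s ≠ 0 := by
  rintro rfl
  exact hS 0 hs (by rwa [neg_zero])

lemma neg_ne_self_of_mem_of_forall_neg_notMem {A : Type*} [AddGroup A] {S : Set A}
    (hS : ∀ k : A, k ∈ S → -k ∉ S) {s : A} (hs : s ∈ S) : -s ≠ s := by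
  intro h
  exact hS s hs (by rwa [h])

section Circulant

variable {n : ℕ} {S : Set (ZMod n)} {hS : ∀ k : ZMod n, k ∈ S → -k ∉ S}

lemma circulant_reachesInTwo_iff {a b : ZMod n} :
    (circulant n S hS).ReachesInTwo a b ↔ ∃ x ∈ S ∪ {0}, ∃ y ∈ S, b - a = x + y := by
  constructor
  · rintro (hab | ⟨c, hac, hcb⟩)
    · exact ⟨0, Or.inr rfl, b - a, hab, (zero_add _).symm⟩
    · exact ⟨c - a, Or.inl hac, b - c, hcb, by ring⟩
  · rintro ⟨x, hx | rfl, y, hy, h⟩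
    · refine Or.inr ⟨a + x, show a + x - a ∈ S by simpa, show b - (a + x) ∈ S from ?_⟩
      rwa [show b - (a + x) = y by linear_combination h]
    · exact Or.inl (show b - a ∈ S by rwa [h, zero_add])

lemma circulant_exists_eq_add_or_eq_neg_add [NeZero n]
    (hG : (circulant n S hS).IsAbsoluteClique) (k : ZMod n) :
    ∃ x ∈ S ∪ {0}, ∃ y ∈ S ∪ {0}, k = x + y ∨ k = -(x + y) := by
  rcases eq_or_ne k 0 with rfl | hk
  · exact ⟨0, Or.inr rfl, 0, Or.inr rfl, Or.inl (add_zero 0).symm⟩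
  rcases hG.reachesInTwo_or hk.symm with h | h
  · obtain ⟨x, hx, y, hy, hxy⟩ := circulant_reachesInTwo_iff.1 h
    exact ⟨x, hx, y, Or.inl hy, Or.inl (by simpa using hxy)⟩
  · obtain ⟨x, hx, y, hy, hxy⟩ := circulant_reachesInTwo_iff.1 h
    exact ⟨x, hx, y, Or.inl hy, Or.inr (by linear_combination -hxy)⟩

/-- Otherwise the path `a → a + s → s` survives the deletion of the arc `0s`. -/
lemma circulant_eq_neg_of_isColoring_deleteArc {s a : ZMod n} {k : ℕ} {φ : ZMod n → Fin k}
    (hφ : ((circulant n S hS).deleteArc 0 s).IsColoring φ) (hs : s ∈ S) (ha : a ≠ 0)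
    (ha0 : (circulant n S hS).adj a 0) (h : φ a = φ s) : a = -s := by
  by_contra hne
  refine hφ.ne_of_reachesInTwo (Or.inr ⟨a + s, ⟨?_, fun h => ha h.1⟩, ?_, fun h' => hne ?_⟩) h
  · show a + s - a ∈ S
    simpa using hs
  · show s - (a + s) ∈ S
    simpa using show 0 - a ∈ S from ha0
  · exact eq_neg_of_add_eq_zero_left h'.1

lemma circulant_apply_neg_eq_of_isColoring_deleteArc [NeZero n]
    (hG : (circulant n S hS).IsAbsoluteClique) {s : ZMod n} (hs : s ∈ S) {k : ℕ}
    {φ : ZMod n → Fin k} (hφ : ((circulant n S hS).deleteArc 0 s).IsColoring φ)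
    (hk : k ≤ n - 2) : φ (-s) = φ s := by
  by_contra hne
  have hinj : Function.Injective fun v : {v : ZMod n // v ≠ 0} => φ v := by
    rintro ⟨a, ha⟩ ⟨b, hb⟩ (h : φ a = φ b)
    by_contra hab
    rcases hG.eq_of_isColoring_deleteArc hφ (fun h => hab (Subtype.ext h)) ha hb h with
      ⟨rfl, ha0⟩ | ⟨rfl, hb0⟩
    · rw [circulant_eq_neg_of_isColoring_deleteArc hφ hs ha ha0 h] at h
      exact hne h
    · rw [circulant_eq_neg_of_isColoring_deleteArc hφ hs hb hb0 h.symm] at h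
      exact hne h.symm
  have hle := Fintype.card_le_of_injective _ hinj
  have hcard : Fintype.card {v : ZMod n // v ≠ 0} = n - 1 := by
    simp [Fintype.card_subtype_compl, ZMod.card]
  have hn : n ≠ 1 := ZMod.nontrivial_iff.1
    ⟨⟨s, 0, ne_zero_of_mem_of_forall_neg_notMem hS hs⟩⟩
  rw [hcard, Fintype.card_fin] at hle
  omega

lemma circulant_exists_isColoring_deleteArc_apply_neg_eq [NeZero n]
    (h : (circulant n S hS).IsDeeplyCriticalClique) {s : ZMod n} (hs : s ∈ S) :
    ∃ k, ∃ φ : ZMod n → Fin k,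
      ((circulant n S hS).deleteArc 0 s).IsColoring φ ∧ φ (-s) = φ s := by
  obtain ⟨φ, hφ⟩ := exists_isColoring_chromNum ((circulant n S hS).deleteArc 0 s)
  have hk : ((circulant n S hS).deleteArc 0 s).chromNum = n - 2 := by
    rw [h.1 0 s (show s - 0 ∈ S by simpa using hs), h.2, Nat.card_zmod]
  exact ⟨_, φ, hφ, circulant_apply_neg_eq_of_isColoring_deleteArc h.2 hs hφ hk.le⟩

lemma circulant_eq_of_add_self_eq_add {s x y : ZMod n} (hs : s ∈ S)
    (hfar : ¬ ((circulant n S hS).deleteArc 0 s).ReachesInTwo (-s) s)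
    (hx : x ∈ S ∪ {0}) (hy : y ∈ S ∪ {0}) (h : s + s = x + y) : x = s ∧ y = s := by
  have hns := neg_ne_self_of_mem_of_forall_neg_notMem hS hs
  have hns0 : -s ≠ 0 := neg_ne_zero.2 (ne_zero_of_mem_of_forall_neg_notMem hS hs)
  have h2s : s + s ∉ S := fun h2s =>
    hfar (Or.inl ⟨show s - -s ∈ S by rwa [sub_neg_eq_add], fun h => hns0 h.1⟩)
  rcases hx with hx | rfl <;> rcases hy with hy | rfl
  · by_cases hxs : x = s
    · exact ⟨hxs, by subst hxs; linear_combination -h⟩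
    refine absurd (Or.inr ⟨x - s, ⟨show x - s - -s ∈ S by simpa, fun h => hns0 h.1⟩,
      show s - (x - s) ∈ S from ?_, fun h => hxs (sub_eq_zero.1 h.1)⟩) hfar
    rwa [show s - (x - s) = y by linear_combination h]
  · exact absurd (show s + s ∈ S by rwa [h, add_zero]) h2s
  · exact absurd (show s + s ∈ S by rwa [h, zero_add]) h2s
  · exact absurd (neg_eq_of_add_eq_zero_left (by simpa using h)) hns

lemma circulant_add_self_ne_neg_add {s x y : ZMod n} (hs : s ∈ S)
    (hfar : ¬ ((circulant n S hS).deleteArc 0 s).ReachesInTwo s (-s))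
    (hx : x ∈ S ∪ {0}) (hy : y ∈ S ∪ {0}) : s + s ≠ -(x + y) := by
  intro h
  have hns := neg_ne_self_of_mem_of_forall_neg_notMem hS hs
  have hs0 := ne_zero_of_mem_of_forall_neg_notMem hS hs
  have h2s : -(s + s) ∉ S := fun h2s =>
    hfar (Or.inl ⟨show -s - s ∈ S by rwa [neg_add'] at h2s, fun h => hs0 h.1⟩)
  rcases hx with hx | rfl <;> rcases hy with hy | rfl
  · refine hfar (Or.inr ⟨s + x, ⟨show s + x - s ∈ S by simpa, fun h => hs0 h.1⟩,
      show -s - (s + x) ∈ S from ?_, fun h => hns h.2⟩)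
    rwa [show -s - (s + x) = y by linear_combination -h]
  · exact h2s (by rwa [h, add_zero, neg_neg])
  · exact h2s (by rwa [h, zero_add, neg_neg])
  · exact hns (neg_eq_of_add_eq_zero_left (by simpa using h))

end Circulant

/-- necessity of the characterization of deeply critical oriented
circulant cliques. -/
theorem stmt4 (n : ℕ) (hn : 1 ≤ n) (S : Set (ZMod n))
    (hS : ∀ k : ZMod n, k ∈ S → -k ∉ S)
    (h : (circulant n S hS).IsDeeplyCriticalClique) :
    (∀ k : ZMod n, ∃ x ∈ S ∪ {0}, ∃ y ∈ S ∪ {0}, k = x + y ∨ k = -(x + y)) ∧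
    (∀ s ∈ S, ∀ x ∈ S ∪ {0}, ∀ y ∈ S ∪ {0},
      (s + s = x + y → x = s ∧ y = s) ∧ s + s ≠ -(x + y)) := by
  have : NeZero n := ⟨by omega⟩
  refine ⟨circulant_exists_eq_add_or_eq_neg_add h.2, fun s hs x hx y hy => ?_⟩
  obtain ⟨k, φ, hφ, hφs⟩ := circulant_exists_isColoring_deleteArc_apply_neg_eq h hs
  exact ⟨circulant_eq_of_add_self_eq_add hs (fun hr => hφ.ne_of_reachesInTwo hr hφs) hx hy,
    circulant_add_self_ne_neg_add hs (fun hr => hφ.ne_of_reachesInTwo hr hφs.symm) hx hy⟩
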